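/- arXiv:2411.03270 — 6 statements merged into one kernel-verified Lean document; each statement's English description precedes it below -/
import Mathlib

section
/- Let G be a finite directed graph that is a forest (acyclic, each vertex has at most one incoming edge) whose vertices are labeled by positive integer indices, and suppose that for every vertex w of index i and every j with 1 ≤ j < i, there exists an out-edge from w to some vertex of index j. Then every vertex of index i ≥ 1 can reach at least 2^(i-1) vertices (including itself). -/
open Relation

/-- A finite directed graph that is a directed forest (no directed cycle, each
vertex has at most one incoming edge) with positive integer indices, such that
every vertex `w` has, for each `j` with `1 ≤ j < idx w`, an out-edge to some
vertex of index `j`.  Then every vertex of index `i ≥ 1` can reach (via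
directed paths, including itself) at least `2^(i-1)` vertices. -/
theorem stmt_0 {V : Type*} [Fintype V] (E : V → V → Prop) (idx : V → ℕ)
    (hpos : ∀ v, 1 ≤ idx v)
    (hacyclic : ∀ v, ¬ Relation.TransGen E v v)
    (hunique_in : ∀ u v w, E u w → E v w → u = v)
    (hedge : ∀ w j, 1 ≤ j → j < idx w → ∃ w', idx w' = j ∧ E w w') :
    ∀ v, 2 ^ (idx v - 1) ≤ Set.ncard {u | Relation.ReflTransGen E v u} := by
  classical
  -- comparability: two ancestors of a common vertex are comparable
  have comp : ∀ {u x y : V}, ReflTransGen E x u → ReflTransGen E y u →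
      ReflTransGen E x y ∨ ReflTransGen E y x := by
    intro u x y hx
    induction hx generalizing y with
    | refl => exact fun hy => Or.inr hy
    | @tail b c hxb hbc ih =>
      intro hy
      rcases hy.cases_tail with h | ⟨b', hyb', hb'c⟩
      · exact Or.inl (h ▸ hxb.tail hbc)
      · obtain rfl := hunique_in _ _ _ hb'c hbc
        exact ih hyb'
  have nocyc : ∀ {a b : V}, E a b → ¬ ReflTransGen E b a := by
    intro a b hab hba
    exact hacyclic a (TransGen.head' hab hba)
  have helper : ∀ {p a b : V}, E p a → E p b → a ≠ b → ReflTransGen E a b → False := by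
    intro p a b hpa hpb hne hab
    rcases hab.cases_tail with h | ⟨z, haz, hzb⟩
    · exact hne h.symm
    · obtain rfl := hunique_in _ _ _ hzb hpb
      exact nocyc hpa haz
  have aux : ∀ m : ℕ, ∑ j ∈ Finset.range m, 2 ^ j + 1 = 2 ^ m := by
    intro m
    induction m with
    | zero => simp
    | succ k ihk => rw [Finset.sum_range_succ, pow_succ]; omega
  suffices H : ∀ n : ℕ, ∀ v : V, idx v = n →
      2 ^ (n - 1) ≤ Set.ncard {u | ReflTransGen E v u} by
    intro v; exact H _ v rfl
  intro n
  induction n using Nat.strong_induction_on with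
  | _ n ih =>
  intro v hv
  set c : ℕ → V := fun j =>
    if h : 1 ≤ j ∧ j < n then (hedge v j h.1 (by omega)).choose else v with hc
  have hcidx : ∀ j ∈ Finset.Ico 1 n, idx (c j) = j ∧ E v (c j) := by
    intro j hj
    rw [Finset.mem_Ico] at hj
    simp only [hc, dif_pos hj]
    exact (hedge v j hj.1 (by omega)).choose_spec
  set R : V → Finset V := fun x => Set.toFinset {u | ReflTransGen E x u} with hRdef
  have hR : ∀ x u, u ∈ R x ↔ ReflTransGen E x u := by
    intro x u; simp [hRdef, Set.mem_toFinset]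
  set B := (Finset.Ico 1 n).biUnion (fun j => R (c j)) with hB
  have hdisj : ∀ j ∈ Finset.Ico 1 n, ∀ k ∈ Finset.Ico 1 n, j ≠ k →
      Disjoint (R (c j)) (R (c k)) := by
    intro j hj k hk hjk
    obtain ⟨hj1, hjE⟩ := hcidx j hj
    obtain ⟨hk1, hkE⟩ := hcidx k hk
    have hne : c j ≠ c k := fun h => hjk (by rw [← hj1, ← hk1, h])
    rw [Finset.disjoint_left]
    intro u huj huk
    rcases comp ((hR _ _).1 huj) ((hR _ _).1 huk) with h | h
    · exact helper hjE hkE hne h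
    · exact helper hkE hjE hne.symm h
  have hcard : B.card = ∑ j ∈ Finset.Ico 1 n, (R (c j)).card :=
    Finset.card_biUnion hdisj
  have hvB : v ∉ B := by
    intro h
    rw [hB, Finset.mem_biUnion] at h
    obtain ⟨j, hj, hvj⟩ := h
    exact nocyc (hcidx j hj).2 ((hR _ _).1 hvj)
  have hsub : insert v B ⊆ R v := by
    intro u hu
    rw [Finset.mem_insert] at hu
    rcases hu with rfl | hu
    · exact (hR _ _).2 ReflTransGen.refl
    · rw [hB, Finset.mem_biUnion] at hu
      obtain ⟨j, hj, hvj⟩ := hu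
      exact (hR _ _).2 (ReflTransGen.head (hcidx j hj).2 ((hR _ _).1 hvj))
  have hlow : ∀ j ∈ Finset.Ico 1 n, 2 ^ (j - 1) ≤ (R (c j)).card := by
    intro j hj
    have := ih j (Finset.mem_Ico.1 hj).2 (c j) (hcidx j hj).1
    rwa [Set.ncard_eq_toFinset_card'] at this
  have hreindex : ∑ j ∈ Finset.Ico 1 n, 2 ^ (j - 1) = ∑ j ∈ Finset.range (n - 1), 2 ^ j := by
    rw [Finset.sum_Ico_eq_sum_range]
    simp
  calc 2 ^ (n - 1) = ∑ j ∈ Finset.range (n - 1), 2 ^ j + 1 := (aux _).symm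
    _ = ∑ j ∈ Finset.Ico 1 n, 2 ^ (j - 1) + 1 := by rw [hreindex]
    _ ≤ B.card + 1 := by rw [hcard]; exact Nat.add_le_add_right (Finset.sum_le_sum hlow) 1
    _ = (insert v B).card := (Finset.card_insert_of_notMem hvB).symm
    _ ≤ (R v).card := Finset.card_le_card hsub
    _ = Set.ncard {u | ReflTransGen E v u} := (Set.ncard_eq_toFinset_card' _).symm
end

section
/- Consider the instance with N = 2n workers w_1 ≻ ⋯ ≻ w_{2n} (a common strict ranking shared by all jobs) and K = n+1 jobs, where for i ≤ n worker w_i has utility 1 for jobs a_i and a_{n+1} and utility 0 otherwise, and for i ≤ n worker w_{n+i} has utility 1 for job a_i only. Then in every weakly stable matching, at most one of the workers w_{n+1}, …, w_{2n} receives utility 1. Consequently, for any distribution D over weakly stable matchings, there exists a worker w with index > n such that U_D(w) ≤ 1/n, i.e., OSS(w)/U_D(w) ≥ n = N/2. -/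
/-- Utility matrix of the lower-bound instance: `2n` workers, `n+1` jobs; for
`i < n`, worker `w_i` has utility 1 for jobs `a_i` and `a_{n+1}`; for `i < n`,
worker `w_{n+i}` has utility 1 only for job `a_i`; all other entries are 0. -/
noncomputable def lbU (n : ℕ) (w : Fin (2 * n)) (a : Fin (n + 1)) : ℝ :=
  if (w : ℕ) < n then (if (a : ℕ) = (w : ℕ) ∨ (a : ℕ) = n then 1 else 0)
  else (if (a : ℕ) = (w : ℕ) - n then 1 else 0)

/-- Weak stability w.r.t. `lbU n` under the common job ranking
`w_1 ≻ w_2 ≻ ⋯` (smaller index preferred). -/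
def lbStable (n : ℕ) (μ : Fin (2 * n) → Option (Fin (n + 1))) : Prop :=
  ¬ ∃ (w : Fin (2 * n)) (a : Fin (n + 1)),
      (∀ w', μ w' = some a → (w : ℕ) < (w' : ℕ)) ∧
      lbU n w a > (μ w).elim 0 (lbU n w)

lemma lbU_mem (n : ℕ) (w : Fin (2 * n)) (a : Fin (n + 1)) :
    lbU n w a = 0 ∨ lbU n w a = 1 := by
  unfold lbU; split_ifs <;> simp

lemma util_mem (n : ℕ) (μ : Fin (2 * n) → Option (Fin (n + 1))) (w : Fin (2 * n)) :
    (μ w).elim 0 (lbU n w) = 0 ∨ (μ w).elim 0 (lbU n w) = 1 := by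
  cases h : μ w with
  | none => left; rfl
  | some a => exact lbU_mem n w a

/-- Any high worker with utility 1 forces its low partner onto the last job. -/
lemma lb_key2 (n : ℕ) (hn : 1 ≤ n) (μ : Fin (2 * n) → Option (Fin (n + 1)))
    (hinj : ∀ w w' a, μ w = some a → μ w' = some a → w = w')
    (hst : lbStable n μ) (w : Fin (2 * n)) (hw : n ≤ (w : ℕ))
    (hu : (μ w).elim 0 (lbU n w) = 1) :
    μ ⟨(w : ℕ) - n, by omega⟩ = some ⟨n, by omega⟩ := by
  have hwlt : (w : ℕ) < 2 * n := w.isLt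
  obtain ⟨a, ha⟩ : ∃ a, μ w = some a := by
    cases h : μ w with
    | none => rw [h] at hu; simp at hu
    | some a => exact ⟨a, rfl⟩
  rw [ha] at hu
  simp only [Option.elim] at hu
  have haval : (a : ℕ) = (w : ℕ) - n := by
    unfold lbU at hu
    rw [if_neg (by omega)] at hu
    by_contra h; rw [if_neg h] at hu; norm_num at hu
  set i : ℕ := (w : ℕ) - n with hi
  have hilt : i < n := by omega
  set wi : Fin (2 * n) := ⟨i, by omega⟩ with hwi
  set ai : Fin (n + 1) := ⟨i, by omega⟩ with hai
  have haai : a = ai := by apply Fin.ext; simp [hai, haval]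
  have hprem : ∀ w'', μ w'' = some ai → (wi : ℕ) < (w'' : ℕ) := by
    intro w'' h''
    have : w'' = w := hinj _ _ _ (by rw [h'', haai]) ha
    subst this
    show i < (w'' : ℕ); omega
  have hUai : lbU n wi ai = 1 := by
    unfold lbU
    rw [if_pos (by simpa [hwi] using hilt), if_pos (by left; rfl)]
  have hb : ¬ (lbU n wi ai > (μ wi).elim 0 (lbU n wi)) :=
    fun h => hst ⟨wi, ai, hprem, h⟩
  rw [hUai] at hb
  push_neg at hb
  cases hmu : μ wi with
  | none => rw [hmu] at hb; norm_num at hb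
  | some b =>
    rw [hmu] at hb
    simp only [Option.elim] at hb
    have hb1 : lbU n wi b = 1 := by
      rcases lbU_mem n wi b with h | h
      · rw [h] at hb; norm_num at hb
      · exact h
    unfold lbU at hb1
    rw [if_pos (by simpa [hwi] using hilt)] at hb1
    have hcond : (b : ℕ) = i ∨ (b : ℕ) = n := by
      by_contra h
      rw [if_neg (by simpa [hwi] using h)] at hb1; norm_num at hb1
    rcases hcond with h | h
    · exfalso
      have hba : b = a := by apply Fin.ext; rw [haai]; simpa [hai] using h
      have : wi = w := hinj _ _ _ (by rw [hmu, hba]) ha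
      have := congrArg Fin.val this
      simp [hwi] at this; omega
    · congr 1; exact Fin.ext h

lemma lb_key (n : ℕ) (hn : 1 ≤ n) (μ : Fin (2 * n) → Option (Fin (n + 1)))
    (hinj : ∀ w w' a, μ w = some a → μ w' = some a → w = w')
    (hst : lbStable n μ) (w w' : Fin (2 * n)) (hw : n ≤ (w : ℕ)) (hw' : n ≤ (w' : ℕ))
    (hu : (μ w).elim 0 (lbU n w) = 1) (hu' : (μ w').elim 0 (lbU n w') = 1) :
    w = w' := by
  have h1 := lb_key2 n hn μ hinj hst w hw hu
  have h2 := lb_key2 n hn μ hinj hst w' hw' hu'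
  have h3 := hinj _ _ _ h1 h2
  have := congrArg Fin.val h3
  simp at this
  apply Fin.ext; omega

/-- In every weakly stable matching of the lower-bound instance at most one of
the workers `w_{n+1}, …, w_{2n}` receives utility 1; consequently for any
distribution over weakly stable matchings, some worker of index `> n` has
expected utility at most `1/n`, i.e. `OSS(w)/U_D(w) ≥ n = N/2`. -/
theorem stmt_5 (n : ℕ) (hn : 1 ≤ n) :
    (∀ μ : Fin (2 * n) → Option (Fin (n + 1)),
      (∀ w w' a, μ w = some a → μ w' = some a → w = w') →
      lbStable n μ →
      ({w : Fin (2 * n) | n ≤ (w : ℕ) ∧ (μ w).elim 0 (lbU n w) = 1}).ncard ≤ 1) ∧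
    (∀ (ι : Type) [Fintype ι] (p : ι → ℝ),
      (∀ i, 0 ≤ p i) → ∑ i, p i = 1 →
      ∀ μ : ι → Fin (2 * n) → Option (Fin (n + 1)),
      (∀ i w w' a, μ i w = some a → μ i w' = some a → w = w') →
      (∀ i, lbStable n (μ i)) →
      ∃ w : Fin (2 * n), n ≤ (w : ℕ) ∧
        ∑ i, p i * (μ i w).elim 0 (lbU n w) ≤ 1 / n) := by
  constructor
  · intro μ hinj hst
    rw [Set.ncard_le_one_iff (Set.toFinite _)]
    rintro a b ⟨ha1, ha2⟩ ⟨hb1, hb2⟩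
    exact lb_key n hn μ hinj hst a b ha1 hb1 ha2 hb2
  · intro ι _ p hp hp1 μ hinj hst
    by_contra h
    push_neg at h
    set S : Finset (Fin (2 * n)) := Finset.univ.filter (fun w => n ≤ (w : ℕ)) with hS
    have hcard : S.card = n := by
      have himg : S = Finset.image (fun i : Fin n => (⟨n + (i : ℕ), by omega⟩ : Fin (2 * n)))
          Finset.univ := by
        ext w
        simp only [hS, Finset.mem_filter, Finset.mem_univ, true_and, Finset.mem_image]
        constructor
        · intro hw
          exact ⟨⟨(w : ℕ) - n, by omega⟩, by apply Fin.ext; simp; omega⟩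
        · rintro ⟨i, rfl⟩; simp
      rw [himg, Finset.card_image_of_injective _ (fun i j hij => by
        have := congrArg Fin.val hij; simp at this; exact Fin.ext this),
        Finset.card_univ, Fintype.card_fin]
    -- each stable matching gives total high utility at most 1
    have h1 : ∀ i, ∑ w ∈ S, (μ i w).elim 0 (lbU n w) ≤ 1 := by
      intro i
      set T : Finset (Fin (2 * n)) := S.filter (fun w => (μ i w).elim 0 (lbU n w) = 1) with hT
      have hsum : ∑ w ∈ S, (μ i w).elim 0 (lbU n w) = ∑ w ∈ T, (μ i w).elim 0 (lbU n w) := by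
        refine (Finset.sum_subset (Finset.filter_subset _ _) ?_).symm
        intro w hwS hwT
        rcases util_mem n (μ i) w with h0 | h0
        · exact h0
        · exact absurd (Finset.mem_filter.mpr ⟨hwS, h0⟩) hwT
      have hcardT : T.card ≤ 1 := by
        rw [Finset.card_le_one]
        intro a ha b hb
        rw [hT, Finset.mem_filter, hS, Finset.mem_filter] at ha hb
        exact lb_key n hn (μ i) (hinj i) (hst i) a b ha.1.2 hb.1.2 ha.2 hb.2
      calc ∑ w ∈ S, (μ i w).elim 0 (lbU n w) = ∑ w ∈ T, (μ i w).elim 0 (lbU n w) := hsum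
        _ = ∑ w ∈ T, 1 := by
            refine Finset.sum_congr rfl ?_
            intro w hw; exact (Finset.mem_filter.mp hw).2
        _ = T.card := by simp
        _ ≤ 1 := by exact_mod_cast hcardT
    have hupper : ∑ w ∈ S, ∑ i, p i * (μ i w).elim 0 (lbU n w) ≤ 1 := by
      rw [Finset.sum_comm]
      calc ∑ i, ∑ w ∈ S, p i * (μ i w).elim 0 (lbU n w)
          = ∑ i, p i * ∑ w ∈ S, (μ i w).elim 0 (lbU n w) := by
            simp [Finset.mul_sum]
        _ ≤ ∑ i, p i * 1 := by
            refine Finset.sum_le_sum fun i _ => ?_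
            exact mul_le_mul_of_nonneg_left (h1 i) (hp i)
        _ = 1 := by simpa using hp1
    have hSne : S.Nonempty := ⟨⟨n, by omega⟩, by simp [hS]⟩
    have hlower : (1 : ℝ) < ∑ w ∈ S, ∑ i, p i * (μ i w).elim 0 (lbU n w) := by
      have : ∑ w ∈ S, (1 / n : ℝ) < ∑ w ∈ S, ∑ i, p i * (μ i w).elim 0 (lbU n w) := by
        refine Finset.sum_lt_sum_of_nonempty hSne fun w hw => ?_
        exact h w (Finset.mem_filter.mp hw).2
      have heq : ∑ w ∈ S, (1 / n : ℝ) = 1 := by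
        rw [Finset.sum_const, hcard, nsmul_eq_mul]
        field_simp
      linarith
    linarith
end

section
/- In the instance of the previous context (N = 2n workers, n+1 jobs with the described binary utilities and global ranking), the matching μ₂ = {(w_{n+i}, a_i) : 1 ≤ i ≤ n} is not weakly stable, but the uniform distribution over {μ₁, μ₂} with μ₁ = {(w_i, a_i) : 1 ≤ i ≤ n} gives every worker expected utility exactly 1/2, so every worker achieves half their optimal stable share. -/
/-- The stable matching `μ₁ = {(w_i, a_i) : i ≤ n}`. -/
def lbμ₁ (n : ℕ) (w : Fin (2 * n)) : Option (Fin (n + 1)) :=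
  if h : (w : ℕ) < n then some ⟨(w : ℕ), by omega⟩ else none

/-- The (non-stable) matching `μ₂ = {(w_{n+i}, a_i) : i ≤ n}`. -/
def lbμ₂ (n : ℕ) (w : Fin (2 * n)) : Option (Fin (n + 1)) :=
  if (w : ℕ) < n then none else some ⟨(w : ℕ) - n, by omega⟩

/-- `μ₂` is not weakly stable, yet the uniform distribution over `{μ₁, μ₂}`
gives every worker expected utility exactly `1/2`, i.e. half of their optimal
stable share (which is 1). -/
theorem stmt_6 (n : ℕ) (hn : 1 ≤ n) :
    ¬ lbStable n (lbμ₂ n) ∧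
    ∀ w : Fin (2 * n),
      (1 / 2 : ℝ) * ((lbμ₁ n w).elim 0 (lbU n w)) +
        (1 / 2 : ℝ) * ((lbμ₂ n w).elim 0 (lbU n w)) = 1 / 2 := by
  constructor
  · intro h
    apply h
    refine ⟨⟨0, by omega⟩, ⟨0, by omega⟩, ?_, ?_⟩
    · intro w' hw'
      simp only [lbμ₂] at hw'
      split at hw' <;> simp_all
      omega
    · have : lbμ₂ n ⟨0, by omega⟩ = none := by
        simp [lbμ₂]; omega
      rw [this]
      simp [lbU]
  · intro w
    by_cases h : (w : ℕ) < n
    · simp [lbμ₁, lbμ₂, lbU, h]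
    · simp [lbμ₁, lbμ₂, lbU, h]
end

section
/- In a market with N workers, K ≥ N jobs, strict preferences on both sides, the worker-optimal stable matching (produced by worker-proposing deferred acceptance) matches every worker, and each worker is matched to a job among her top N most-preferred jobs. -/
/-!
In a stable matching, every job that a worker `w` prefers to her assignment (every job, if she is
unmatched) is held by some other worker, for otherwise it would form a blocking pair with `w`.
The other `N - 1` workers hold at most `N - 1` jobs. Since `K ≥ N`, this rules out `w` being
unmatched, and it bounds the number of jobs she ranks above her own.
-/

/-- A matching `μ` (workers to jobs, possibly unmatched) is stable w.r.t.
strict preferences encoded by rank functions `wr` (worker `w` prefers job `a`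
to `b` iff `wr w a < wr w b`) and `jr` (job `a` prefers worker `w` to `w'` iff
`jr a w < jr a w'`): there is no blocking pair `(w, a)` where `w` prefers `a`
to her assignment (or is unmatched) and `a` prefers `w` to its assigned worker
(or is unmatched). -/
def RankStable {N K : ℕ} (wr : Fin N → Fin K → ℕ) (jr : Fin K → Fin N → ℕ)
    (μ : Fin N → Option (Fin K)) : Prop :=
  ¬ ∃ (w : Fin N) (a : Fin K),
      (μ w = none ∨ ∃ b, μ w = some b ∧ wr w a < wr w b) ∧
      (∀ w', μ w' = some a → jr a w < jr a w')

theorem Finset.card_lt_card_of_forall_exists_ne_eq_some {α β : Type*} [Fintype α]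
    [DecidableEq α] [DecidableEq β] (f : α → Option β) (x : α) (s : Finset β)
    (hs : ∀ b ∈ s, ∃ y, y ≠ x ∧ f y = some b) : s.card < Fintype.card α :=
  calc s.card = (s.map Function.Embedding.some).card := (card_map _).symm
    _ ≤ ((univ.erase x).image f).card := card_le_card fun _ hmem => by
      obtain ⟨b, hb, rfl⟩ := mem_map.1 hmem
      obtain ⟨y, hyx, hy⟩ := hs b hb
      exact mem_image.2 ⟨y, mem_erase.2 ⟨hyx, mem_univ y⟩, hy⟩
    _ ≤ (univ.erase x).card := card_image_le
    _ < univ.card := card_erase_lt_of_mem (mem_univ x)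

theorem RankStable.exists_ne_eq_some_of_prefers {N K : ℕ} {wr : Fin N → Fin K → ℕ}
    {jr : Fin K → Fin N → ℕ} {μ : Fin N → Option (Fin K)} (h : RankStable wr jr μ)
    {w : Fin N} {a : Fin K} (hw : μ w = none ∨ ∃ b, μ w = some b ∧ wr w a < wr w b) :
    ∃ w', w' ≠ w ∧ μ w' = some a := by
  obtain ⟨w', hw'⟩ : ∃ w', μ w' = some a := by
    by_contra! hfree
    exact h ⟨w, a, hw, fun w' hw' => absurd hw' (hfree w')⟩
  refine ⟨w', ?_, hw'⟩
  rintro rfl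
  rcases hw with hw | ⟨b, hb, hlt⟩
  · simp [hw] at hw'
  · obtain rfl : a = b := Option.some_injective _ (hw'.symm.trans hb)
    exact lt_irrefl _ hlt

theorem stmt_8_general {N K : ℕ} (hNK : N ≤ K)
    (wr : Fin N → Fin K → ℕ) (jr : Fin K → Fin N → ℕ)
    (μstar : Fin N → Option (Fin K))
    (hstable : RankStable wr jr μstar) :
    ∀ w : Fin N, ∃ a, μstar w = some a ∧
      (Finset.univ.filter (fun b => wr w b < wr w a)).card < N := by
  classical
  intro w
  obtain ⟨a, ha⟩ : ∃ a, μstar w = some a := by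
    rcases hw : μstar w with _ | a
    · have hK := Finset.card_lt_card_of_forall_exists_ne_eq_some μstar w Finset.univ
        fun _ _ => hstable.exists_ne_eq_some_of_prefers (Or.inl hw)
      simp only [Finset.card_univ, Fintype.card_fin] at hK
      omega
    · exact ⟨a, rfl⟩
  refine ⟨a, ha, ?_⟩
  simpa using Finset.card_lt_card_of_forall_exists_ne_eq_some μstar w _ fun b hb =>
    hstable.exists_ne_eq_some_of_prefers (Or.inr ⟨a, ha, (Finset.mem_filter.1 hb).2⟩)

/-- In a market with `N` workers, `K ≥ N` jobs and strict preferences on both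
sides, the worker-optimal stable matching matches every worker, and each
worker's assigned job is among her `N` most-preferred jobs (fewer than `N`
jobs are strictly preferred to it). -/
theorem stmt_8 {N K : ℕ} (hNK : N ≤ K)
    (wr : Fin N → Fin K → ℕ) (jr : Fin K → Fin N → ℕ)
    (hwr : ∀ w, Function.Injective (wr w))
    (hjr : ∀ a, Function.Injective (jr a))
    (μstar : Fin N → Option (Fin K))
    (hmatch : ∀ w w' a, μstar w = some a → μstar w' = some a → w = w')
    (hstable : RankStable wr jr μstar)
    (hopt : ∀ μ : Fin N → Option (Fin K),
      (∀ w w' a, μ w = some a → μ w' = some a → w = w') →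
      RankStable wr jr μ →
      ∀ w b, μ w = some b → ∃ b', μstar w = some b' ∧ wr w b' ≤ wr w b) :
    ∀ w : Fin N, ∃ a, μstar w = some a ∧
      (Finset.univ.filter (fun b => wr w b < wr w a)).card < N :=
  stmt_8_general hNK wr jr μstar hstable
end

section
/- Let U and U' be the 4×4 utility matrices of the lower-bound construction, which differ only in entry (1,1): U(1,1) = 1/2 and U'(1,1) = 1/2 + γ with 0 < γ < 1/4, under the global job ranking w_1 ≻ w_2 ≻ w_3 ≻ w_4. Then under U' the unique weakly stable matching is μ' = {(w_1,a_1),(w_2,a_3),(w_3,a_4),(w_4,a_2)}, giving worker utilities (1/2 + γ, 1/2, 1/4, 0). -/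
/-!
Weak stability only compares utilities within a worker's own row, so it is unchanged when each row
is replaced by any matrix inducing the same strict order on jobs. For `0 < γ` the rows of `U'` are
ordered like the rows of a small natural-number rank matrix, and for that matrix the claim is a
finite check over the 24 complete matchings.
-/

/-- The perturbed utility matrix `U'` of the bandit lower-bound construction
(`U'` differs from `U` only in entry `(1,1)`, which is `1/2 + γ`). -/
noncomputable def Uper (γ : ℝ) : Fin 4 → Fin 4 → ℝ :=
  ![![1/2 + γ, 1/2, 0, 0], ![1/2, 0, 1/2, 0], ![1/2, 0, 0, 1/4], ![0, 0, 1/2, 0]]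

/-- Weak stability of a complete matching (a permutation) under the global job
ranking `w_1 ≻ w_2 ≻ w_3 ≻ w_4` and utilities `Uper γ`. -/
def permStable (γ : ℝ) (μ : Equiv.Perm (Fin 4)) : Prop :=
  ¬ ∃ (w a : Fin 4), (w : ℕ) < ((μ.symm a : Fin 4) : ℕ) ∧
      Uper γ w a > Uper γ w (μ w)

/-- The matching `μ' = {(w_1,a_1),(w_2,a_3),(w_3,a_4),(w_4,a_2)}`. -/
def μper : Equiv.Perm (Fin 4) :=
  ⟨![0, 2, 3, 1], ![0, 3, 1, 2], by decide, by decide⟩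

open Equiv

section WeakStability

variable {n : ℕ} {α β : Type*}

/-- Every job ranks workers by index, `0 ≻ 1 ≻ ⋯`. -/
def IsBlockingPair [LT α] (u : Fin n → Fin n → α) (μ : Perm (Fin n)) (w a : Fin n) : Prop :=
  w < μ.symm a ∧ u w (μ w) < u w a

def IsWeaklyStable [LT α] (u : Fin n → Fin n → α) (μ : Perm (Fin n)) : Prop :=
  ∀ w a, ¬ IsBlockingPair u μ w a

instance [LT α] [DecidableLT α] (u : Fin n → Fin n → α) (μ : Perm (Fin n)) :
    Decidable (IsWeaklyStable u μ) := by
  unfold IsWeaklyStable IsBlockingPair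
  infer_instance

theorem isWeaklyStable_congr [LT α] [LT β] {u : Fin n → Fin n → α} {v : Fin n → Fin n → β}
    (huv : ∀ w a b, u w a < u w b ↔ v w a < v w b) (μ : Perm (Fin n)) :
    IsWeaklyStable u μ ↔ IsWeaklyStable v μ := by
  simp only [IsWeaklyStable, IsBlockingPair, huv]

end WeakStability

theorem permStable_iff_isWeaklyStable (γ : ℝ) (μ : Perm (Fin 4)) :
    permStable γ μ ↔ IsWeaklyStable (Uper γ) μ := by
  simp only [permStable, IsWeaklyStable, IsBlockingPair, Fin.lt_def, gt_iff_lt, not_exists]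

def uperRank : Fin 4 → Fin 4 → ℕ :=
  ![![2, 1, 0, 0], ![1, 0, 1, 0], ![2, 0, 0, 1], ![0, 0, 1, 0]]

theorem uper_lt_iff_uperRank_lt {γ : ℝ} (hγ : 0 < γ) (w a b : Fin 4) :
    Uper γ w a < Uper γ w b ↔ uperRank w a < uperRank w b := by
  fin_cases w <;> fin_cases a <;> fin_cases b <;> norm_num [Uper, uperRank] <;> linarith

theorem isWeaklyStable_uperRank_iff (μ : Perm (Fin 4)) :
    IsWeaklyStable uperRank μ ↔ μ = μper := by
  revert μ
  decide

theorem stmt_14_general (γ : ℝ) (hγ0 : 0 < γ) :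
    (∀ μ : Equiv.Perm (Fin 4), permStable γ μ ↔ μ = μper) ∧
    Uper γ 0 (μper 0) = 1 / 2 + γ ∧ Uper γ 1 (μper 1) = 1 / 2 ∧
    Uper γ 2 (μper 2) = 1 / 4 ∧ Uper γ 3 (μper 3) = 0 := by
  refine ⟨fun μ => ?_, ?_⟩
  · rw [permStable_iff_isWeaklyStable, isWeaklyStable_congr (uper_lt_iff_uperRank_lt hγ0),
      isWeaklyStable_uperRank_iff]
  · simp [Uper, μper, Matrix.cons_val]

/-- For `0 < γ < 1/4`, the unique weakly stable (complete) matching under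
`U'` is `μ'`, giving the workers utilities `(1/2 + γ, 1/2, 1/4, 0)`. -/
theorem stmt_14 (γ : ℝ) (hγ0 : 0 < γ) (hγ : γ < 1 / 4) :
    (∀ μ : Equiv.Perm (Fin 4), permStable γ μ ↔ μ = μper) ∧
    Uper γ 0 (μper 0) = 1 / 2 + γ ∧ Uper γ 1 (μper 1) = 1 / 2 ∧
    Uper γ 2 (μper 2) = 1 / 4 ∧ Uper γ 3 (μper 3) = 0 :=
  stmt_14_general γ hγ0
end

section
/- In the duplication construction with m copies of each job and the lexicographic worker preferences, if the worker-optimal stable matching μ̃ on the duplicated instance assigns worker w a copy of some job with a given duplication index i, then the induced matching μ̃_i (matching each job a to μ̃(a^(i))) is internally stable: there is no pair (w, a), both matched in μ̃_i, with w ≻_a μ̃_i(a) and U(w, a) > U(w, μ̃_i(w)). -/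
/-- Worker `w`'s lexicographic preference over duplicated jobs
`(k, i) ∈ Fin K × Fin m`: higher utility first, then lower duplication index,
then lower job index. -/
def dupPref {W : Type*} {K m : ℕ} (U : W → Fin K → ℝ) (w : W)
    (x y : Fin K × Fin m) : Prop :=
  U w x.1 > U w y.1 ∨ (U w x.1 = U w y.1 ∧ (x.2 < y.2 ∨ (x.2 = y.2 ∧ x.1 < y.1)))

/-- If `μ̃` is a stable matching of the duplicated instance (no blocking pair
w.r.t. the lexicographic worker preferences and the inherited strict job
preferences), then for every duplication index `i` the induced matching
`μ̃_i` (matching `w` with `a` iff `μ̃ w = (a, i)`) is internally stable: there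
is no pair `(w, a)`, both matched in `μ̃_i`, with `w ≻_a μ̃_i(a)` and
`U(w, a) > U(w, μ̃_i(w))`. -/
theorem stmt_19 {W : Type*} {K m : ℕ}
    (jobPref : Fin K → W → W → Prop) (U : W → Fin K → ℝ)
    (μt : W → Option (Fin K × Fin m))
    (hinj : ∀ w w' c, μt w = some c → μt w' = some c → w = w')
    (hstable : ¬ ∃ (w : W) (c : Fin K × Fin m),
      (μt w = none ∨ ∃ c', μt w = some c' ∧ dupPref U w c c') ∧
      (∀ w', μt w' = some c → jobPref c.1 w w')) :
    ∀ i : Fin m, ¬ ∃ (w : W) (a j : Fin K) (w'' : W),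
      μt w = some (j, i) ∧ μt w'' = some (a, i) ∧
      (∀ w', μt w' = some (a, i) → jobPref a w w') ∧
      U w a > U w j := by
  intro i ⟨w, a, j, w'', hw, hw'', hpref, hU⟩
  exact hstable ⟨w, (a, i), Or.inr ⟨(j, i), hw, Or.inl hU⟩, hpref⟩
end
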